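/- Proposition 2 (unbiasedness of CHIPS). Assume Assumption A2 (common cluster support) and Assumption A3 (reward homogeneity, with cluster-level mean reward q̄). Then the CHIPS estimator is unbiased: Σ_{x,c,a} p₀(x,c,a) · w(a,c) · q̄ a c = V(π); equivalently, Bias(ω) = 0 for the weight function ω(x,c,a) = w(a,c). -/

import Mathlib

open Finset

namespace OPE

noncomputable section

variable {X C A : Type*} [Fintype X] [Fintype C] [Fintype A]
  [Nonempty X] [Nonempty C] [Nonempty A]

/-- Cluster marginal `p(c) = Σ_x pX x * pC x c`. -/
def pc (pX : X → ℝ) (pC : X → C → ℝ) (c : C) : ℝ :=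
  ∑ x, pX x * pC x c

/-- Conditional context distribution `p(x|c)` (zero when `p(c) = 0`). -/
def pxc (pX : X → ℝ) (pC : X → C → ℝ) (x : X) (c : C) : ℝ :=
  pX x * pC x c / pc pX pC c

/-- `p(a|c,ρ) = Σ_x p(x|c) * ρ x a`. -/
def pac (pX : X → ℝ) (pC : X → C → ℝ) (ρ : X → A → ℝ) (c : C) (a : A) : ℝ :=
  ∑ x, pxc pX pC x c * ρ x a

/-- IPS weight `w(a,x) = π x a / π₀ x a` (with the convention `t/0 = 0`). -/
def wIPS (π π₀ : X → A → ℝ) (a : A) (x : X) : ℝ := π x a / π₀ x a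

/-- CHIPS weight `w(a,c) = p(a|c,π) / p(a|c,π₀)` (with the convention `t/0 = 0`). -/
def wCHIPS (pX : X → ℝ) (pC : X → C → ℝ) (π π₀ : X → A → ℝ) (a : A) (c : C) : ℝ :=
  pac pX pC π c a / pac pX pC π₀ c a

/-- Policy value `V(π)`. -/
def V (pX : X → ℝ) (pC : X → C → ℝ) (π : X → A → ℝ) (q : A → C → X → ℝ) : ℝ :=
  ∑ x, ∑ c, ∑ a, pX x * pC x c * π x a * q a c x

/-- Single-sample mean of a weighted estimator under the logging distribution. -/
def mu (pX : X → ℝ) (pC : X → C → ℝ) (π₀ : X → A → ℝ) (q : A → C → X → ℝ)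
    (ω : X → C → A → ℝ) : ℝ :=
  ∑ x, ∑ c, ∑ a, (pX x * pC x c * π₀ x a) * ω x c a * q a c x

/-- Bias of a weighted estimator. -/
def bias (pX : X → ℝ) (pC : X → C → ℝ) (π π₀ : X → A → ℝ) (q : A → C → X → ℝ)
    (ω : X → C → A → ℝ) : ℝ :=
  mu pX pC π₀ q ω - V pX pC π q

/-- Single-sample variance of a weighted estimator. -/
def varW (pX : X → ℝ) (pC : X → C → ℝ) (π₀ : X → A → ℝ) (q m2 : A → C → X → ℝ)
    (ω : X → C → A → ℝ) : ℝ :=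
  (∑ x, ∑ c, ∑ a, (pX x * pC x c * π₀ x a) * ω x c a ^ 2 * m2 a c x)
    - (mu pX pC π₀ q ω) ^ 2

/-- Single-sample mean squared error of a weighted estimator. -/
def mseW (pX : X → ℝ) (pC : X → C → ℝ) (π π₀ : X → A → ℝ) (q m2 : A → C → X → ℝ)
    (ω : X → C → A → ℝ) : ℝ :=
  (∑ x, ∑ c, ∑ a, (pX x * pC x c * π₀ x a) * ω x c a ^ 2 * m2 a c x)
    - 2 * V pX pC π q * mu pX pC π₀ q ω + (V pX pC π q) ^ 2

/-!
Under reward homogeneity both the value and the CHIPS mean integrate a function of `(a, c)`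
only, so summing out the context reduces each joint law to `p(c) p(a|c,ρ)`. The CHIPS weight
is the density ratio of these cluster-action laws; common support guarantees that the
convention `t/0 = 0` drops no mass of the target law.
-/

section ClusterFactorization

omit [Fintype C] [Fintype A] [Nonempty X] [Nonempty C] [Nonempty A]

variable {pX : X → ℝ} {pC : X → C → ℝ}

theorem pc_nonneg (hpX : ∀ x, 0 ≤ pX x) (hpC : ∀ x c, 0 ≤ pC x c) (c : C) :
    0 ≤ pc pX pC c :=
  sum_nonneg fun x _ => mul_nonneg (hpX x) (hpC x c)

theorem pxc_nonneg (hpX : ∀ x, 0 ≤ pX x) (hpC : ∀ x c, 0 ≤ pC x c) (x : X) (c : C) :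
    0 ≤ pxc pX pC x c :=
  div_nonneg (mul_nonneg (hpX x) (hpC x c)) (pc_nonneg hpX hpC c)

theorem pac_nonneg {ρ : X → A → ℝ} (hpX : ∀ x, 0 ≤ pX x) (hpC : ∀ x c, 0 ≤ pC x c)
    (hρ : ∀ x a, 0 ≤ ρ x a) (c : C) (a : A) : 0 ≤ pac pX pC ρ c a :=
  sum_nonneg fun x _ => mul_nonneg (pxc_nonneg hpX hpC x c) (hρ x a)

/-- When `p(c) = 0`, nonnegativity forces every `p(x, c)` to vanish, so the identity survives
the junk value `p(x|c) = 0`. -/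
theorem pc_mul_pxc (hpX : ∀ x, 0 ≤ pX x) (hpC : ∀ x c, 0 ≤ pC x c) (x : X) (c : C) :
    pc pX pC c * pxc pX pC x c = pX x * pC x c := by
  rcases (pc_nonneg hpX hpC c).eq_or_lt with hc | hc
  · have hxc : pX x * pC x c = 0 :=
      (sum_eq_zero_iff_of_nonneg fun x _ => mul_nonneg (hpX x) (hpC x c)).mp hc.symm x
        (mem_univ x)
    rw [← hc, zero_mul, hxc]
  · exact mul_div_cancel₀ _ hc.ne'

theorem sum_mul_eq_pc_mul_pac (hpX : ∀ x, 0 ≤ pX x) (hpC : ∀ x c, 0 ≤ pC x c)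
    (ρ : X → A → ℝ) (c : C) (a : A) :
    ∑ x, pX x * pC x c * ρ x a = pc pX pC c * pac pX pC ρ c a := by
  simp only [pac, mul_sum, ← mul_assoc, pc_mul_pxc hpX hpC]

theorem pc_mul_pac_mul_wCHIPS {π π₀ : X → A → ℝ} {c : C} {a : A}
    (hsupp : 0 < pc pX pC c → 0 < pac pX pC π c a → 0 < pac pX pC π₀ c a)
    (hpc : 0 ≤ pc pX pC c) (hπ : 0 ≤ pac pX pC π c a) :
    pc pX pC c * pac pX pC π₀ c a * wCHIPS pX pC π π₀ a c = pc pX pC c * pac pX pC π c a := by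
  rcases hpc.eq_or_lt with hc | hc
  · simp [← hc]
  by_cases h₀ : pac pX pC π₀ c a = 0
  · have hπ_zero : pac pX pC π c a = 0 :=
      le_antisymm (not_lt.mp fun hpos => (hsupp hc hpos).ne' h₀) hπ
    simp [wCHIPS, h₀, hπ_zero]
  · rw [wCHIPS, mul_assoc, mul_div_cancel₀ _ h₀]

end ClusterFactorization

omit [Nonempty X] [Nonempty C] [Nonempty A] in
theorem sum_joint_eq_sum_cluster {pX : X → ℝ} {pC : X → C → ℝ} (hpX : ∀ x, 0 ≤ pX x)
    (hpC : ∀ x c, 0 ≤ pC x c) (ρ : X → A → ℝ) (g : A → C → ℝ) :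
    ∑ x, ∑ c, ∑ a, pX x * pC x c * ρ x a * g a c
      = ∑ c, ∑ a, pc pX pC c * pac pX pC ρ c a * g a c := by
  rw [sum_comm]
  refine sum_congr rfl fun c _ => ?_
  rw [sum_comm]
  refine sum_congr rfl fun a _ => ?_
  rw [← sum_mul, sum_mul_eq_pc_mul_pac hpX hpC]

theorem prop2_chips_unbiased_general
    (pX : X → ℝ) (pC : X → C → ℝ) (π π₀ : X → A → ℝ)
    (q : A → C → X → ℝ) (qbar : A → C → ℝ)
    (hpX0 : ∀ x, 0 ≤ pX x)
    (hpC0 : ∀ x c, 0 ≤ pC x c)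
    (hπ : ∀ x a, 0 ≤ π x a)
    (hA2 : ∀ (a : A) (c : C), 0 < pc pX pC c →
      0 < pac pX pC π c a → 0 < pac pX pC π₀ c a)
    (hA3 : ∀ (a : A) (c : C) (x : X), q a c x = qbar a c) :
    (∑ x, ∑ c, ∑ a, (pX x * pC x c * π₀ x a) *
        wCHIPS pX pC π π₀ a c * qbar a c) = V pX pC π q ∧
    bias pX pC π π₀ q (fun _ c a => wCHIPS pX pC π π₀ a c) = 0 := by
  have hV : V pX pC π q = ∑ x, ∑ c, ∑ a, pX x * pC x c * π x a * qbar a c := by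
    simp only [V, hA3]
  have hunbiased : (∑ x, ∑ c, ∑ a, (pX x * pC x c * π₀ x a) *
      wCHIPS pX pC π π₀ a c * qbar a c) = V pX pC π q := by
    simp only [hV, mul_assoc _ (wCHIPS _ _ _ _ _ _)]
    rw [sum_joint_eq_sum_cluster hpX0 hpC0 π₀ (fun a c => wCHIPS pX pC π π₀ a c * qbar a c),
      sum_joint_eq_sum_cluster hpX0 hpC0 π]
    refine sum_congr rfl fun c _ => sum_congr rfl fun a _ => ?_
    rw [← mul_assoc, pc_mul_pac_mul_wCHIPS (hA2 a c) (pc_nonneg hpX0 hpC0 c)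
      (pac_nonneg hpX0 hpC0 hπ c a)]
  refine ⟨hunbiased, ?_⟩
  rw [bias, sub_eq_zero, mu, ← hunbiased]
  simp only [hA3]

/-- Proposition 2 (unbiasedness of CHIPS). -/
theorem prop2_chips_unbiased
    (pX : X → ℝ) (pC : X → C → ℝ) (π π₀ : X → A → ℝ)
    (q : A → C → X → ℝ) (qbar : A → C → ℝ)
    (hpX0 : ∀ x, 0 ≤ pX x) (hpX1 : ∑ x, pX x = 1)
    (hpC0 : ∀ x c, 0 ≤ pC x c) (hpC1 : ∀ x, ∑ c, pC x c = 1)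
    (hπ : ∀ x a, 0 ≤ π x a) (hπ1 : ∀ x, ∑ a, π x a = 1)
    (hπ₀ : ∀ x a, 0 ≤ π₀ x a) (hπ₀1 : ∀ x, ∑ a, π₀ x a = 1)
    (hA2 : ∀ (a : A) (c : C), 0 < pc pX pC c →
      0 < pac pX pC π c a → 0 < pac pX pC π₀ c a)
    (hA3 : ∀ (a : A) (c : C) (x : X), q a c x = qbar a c) :
    (∑ x, ∑ c, ∑ a, (pX x * pC x c * π₀ x a) *
        wCHIPS pX pC π π₀ a c * qbar a c) = V pX pC π q ∧
    bias pX pC π π₀ q (fun _ c a => wCHIPS pX pC π π₀ a c) = 0 :=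
  prop2_chips_unbiased_general pX pC π π₀ q qbar hpX0 hpC0 hπ hA2 hA3

end

end OPE
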